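/- For each positive integer q and sample size n, the distribution of the statistic D_q(F_n, F) is the same for every continuous distribution function F, where F_n is the empirical distribution function of n i.i.d. samples from F. -/

import Mathlib

/-!
Almost surely every sample `X j` has `0 < F (X j) < 1` and is the smallest point of its level
set `F ⁻¹' {F (X j)}`: otherwise `F (X j)` would be `0`, `1`, or a value `F` takes at a rational,
a countable set of values that the uniform variable `F (X j)` avoids. For such samples
`X j ≤ t ↔ F (X j) ≤ F t`, so `v ↦ F ∘ v` and, after clamping into `(0, 1)`, a right inverse
of `F` transport admissible vectors between `D_q(F_n, F)` and `D_q(U_n, U)`, where `U_n` is the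
empirical distribution function of the uniform samples `F (X j)`; hence the two statistics agree.
The law of `D_q(U_n, U)` only depends on the joint law of the samples, which is the product of
uniform laws in both cases. Measurability holds because, by right-continuity, the infimum
defining `D_q` may be taken over rational vectors.
-/

open Filter Set

/-- A distribution function on ℝ: nondecreasing, right-continuous,
with limit 0 at -∞ and limit 1 at ∞. -/
def IsDistFun (F : ℝ → ℝ) : Prop :=
  Monotone F ∧ (∀ x, ContinuousWithinAt F (Set.Ici x) x) ∧
  Tendsto F atBot (nhds 0) ∧ Tendsto F atTop (nhds 1)

/-- Extended evaluation: index 0 ↦ F(-∞)=0, index q+1 ↦ F(∞)=1,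
indices 1..q ↦ F(vᵢ). -/
noncomputable def dext (q : ℕ) (F : ℝ → ℝ) (v : ℕ → ℝ) : ℕ → ℝ := fun i =>
  if i = 0 then 0 else if i = q + 1 then 1 else F (v i)

/-- r_{F,G}(v) = Σ_{i=0}^{q} min{F|_{vᵢ}^{vᵢ₊₁}, G|_{vᵢ}^{vᵢ₊₁}}. -/
noncomputable def rFG (q : ℕ) (F G : ℝ → ℝ) (v : ℕ → ℝ) : ℝ :=
  ∑ i ∈ Finset.range (q + 1),
    min (dext q F v (i + 1) - dext q F v i) (dext q G v (i + 1) - dext q G v i)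

/-- The statistic D_q(F, G) = 1 - inf over nondecreasing v ∈ ℝ^q of r_{F,G}(v). -/
noncomputable def Dq (q : ℕ) (F G : ℝ → ℝ) : ℝ :=
  1 - sInf {r | ∃ v : ℕ → ℝ, MonotoneOn v (Set.Icc 1 q) ∧ r = rFG q F G v}

open MeasureTheory ProbabilityTheory

/-- The standard uniform distribution function U(x) = max{0, min{x, 1}}. -/
noncomputable def Ucdf : ℝ → ℝ := fun x => max 0 (min x 1)

/-- The empirical distribution function of Y₁(ω),…,Y_n(ω). -/
noncomputable def empOf {Ω : Type*} (n : ℕ) (Y : Fin n → Ω → ℝ) (ω : Ω) : ℝ → ℝ :=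
  fun x => (∑ i : Fin n, if Y i ω ≤ x then (1 : ℝ) else 0) / n

open Topology

section Dext

variable {q : ℕ} {G G' H H' : ℝ → ℝ} {v v' : ℕ → ℝ} {i : ℕ}

lemma IsDistFun.mem_Icc (hG : IsDistFun G) (x : ℝ) : G x ∈ Icc 0 1 :=
  ⟨hG.1.le_of_tendsto hG.2.2.1 x, hG.1.ge_of_tendsto hG.2.2.2 x⟩

lemma dext_congr (h : ∀ i ∈ Icc 1 q, G (v i) = G' (v' i)) (hi : i ≤ q + 1) :
    dext q G v i = dext q G' v' i := by
  unfold dext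
  split_ifs <;> first | rfl | exact h i ⟨by omega, by omega⟩

lemma rFG_congr (hG : ∀ i ∈ Icc 1 q, G (v i) = G' (v' i))
    (hH : ∀ i ∈ Icc 1 q, H (v i) = H' (v' i)) : rFG q G H v = rFG q G' H' v' :=
  Finset.sum_congr rfl fun i hi => by
    have hi : i < q + 1 := Finset.mem_range.1 hi
    rw [dext_congr hG (by omega), dext_congr hG hi.le, dext_congr hH (by omega),
      dext_congr hH hi.le]

lemma dext_mem_Icc (hG : IsDistFun G) : dext q G v i ∈ Icc 0 1 := by
  unfold dext
  split_ifs <;> first | exact hG.mem_Icc _ | simp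

lemma dext_le_dext_succ (hG : IsDistFun G) (hv : MonotoneOn v (Icc 1 q)) (hi : i ≤ q) :
    dext q G v i ≤ dext q G v (i + 1) := by
  unfold dext
  split_ifs <;> first
    | exact (hG.mem_Icc _).1 | exact (hG.mem_Icc _).2
    | exact hG.1 (hv ⟨by omega, by omega⟩ ⟨by omega, by omega⟩ (by omega)) | simp_all

lemma rFG_nonneg (hG : IsDistFun G) (hH : IsDistFun H) (hv : MonotoneOn v (Icc 1 q)) :
    0 ≤ rFG q G H v :=
  Finset.sum_nonneg fun i hi => by
    have hi : i ≤ q := Nat.lt_succ_iff.1 (Finset.mem_range.1 hi)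
    exact le_min (sub_nonneg.2 (dext_le_dext_succ hG hv hi))
      (sub_nonneg.2 (dext_le_dext_succ hH hv hi))

lemma bddBelow_rFG (hG : IsDistFun G) (hH : IsDistFun H) :
    BddBelow {r | ∃ v, MonotoneOn v (Icc 1 q) ∧ r = rFG q G H v} := by
  refine ⟨0, ?_⟩
  rintro _ ⟨v, hv, rfl⟩
  exact rFG_nonneg hG hH hv

lemma dext_eq_of_dext_lt {a : ℝ} (h : ∀ t, H t < H' t → G t = a)
    (hi : dext q H v i < dext q H' v i) : dext q G v i = a := by
  unfold dext at *
  split_ifs at * <;> first | exact absurd hi (lt_irrefl _) | exact h _ hi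

lemma min_sub_le_min_sub {a₀ a₁ b₀ b₁ b₀' b₁' : ℝ} (ha₀ : 0 ≤ a₀) (ha₁ : a₁ ≤ 1)
    (hb : b₀ ≤ b₁) (h₀ : b₀' < b₀ → a₀ = 1) (h₁ : b₁ < b₁' → a₁ = 0) :
    min (a₁ - a₀) (b₁' - b₀') ≤ min (a₁ - a₀) (b₁ - b₀) := by
  by_cases hb₁ : b₁ < b₁'
  · have := h₁ hb₁
    exact (min_le_left _ _).trans (le_min le_rfl (by linarith))
  by_cases hb₀ : b₀' < b₀
  · have := h₀ hb₀
    exact (min_le_left _ _).trans (le_min le_rfl (by linarith))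
  exact min_le_min le_rfl (by linarith)

lemma rFG_le_rFG (hG : IsDistFun G) (hH : IsDistFun H) (h₀ : ∀ t, H t < H' t → G t = 0)
    (h₁ : ∀ t, H' t < H t → G t = 1) (hv : MonotoneOn v (Icc 1 q)) :
    rFG q G H' v ≤ rFG q G H v :=
  Finset.sum_le_sum fun i hi => by
    have hi : i ≤ q := Nat.lt_succ_iff.1 (Finset.mem_range.1 hi)
    exact min_sub_le_min_sub (dext_mem_Icc hG).1
      (dext_mem_Icc hG).2 (dext_le_dext_succ hH hv hi) (dext_eq_of_dext_lt h₁)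
      (dext_eq_of_dext_lt h₀)

lemma Dq_le_Dq_of_forall_exists_le (hG' : IsDistFun G') (hH' : IsDistFun H')
    (h : ∀ v, MonotoneOn v (Icc 1 q) →
      ∃ v', MonotoneOn v' (Icc 1 q) ∧ rFG q G' H' v' ≤ rFG q G H v) :
    Dq q G H ≤ Dq q G' H' := by
  unfold Dq
  refine sub_le_sub_left (le_csInf ?_ ?_) 1
  · exact ⟨_, fun _ => 0, monotoneOn_const, rfl⟩
  rintro _ ⟨v, hv, rfl⟩
  obtain ⟨v', hv', hle⟩ := h v hv
  exact (csInf_le (bddBelow_rFG hG' hH') ⟨v', hv', rfl⟩).trans hle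

end Dext

section EmpiricalCdf

variable {n : ℕ}

/-- `empOf n X ω` is `empCdf (X · ω)` by definition. -/
noncomputable def empCdf (y : Fin n → ℝ) : ℝ → ℝ :=
  fun x => (∑ j, if y j ≤ x then (1 : ℝ) else 0) / n

lemma empCdf_congr {y y' : Fin n → ℝ} {s s' : ℝ} (h : ∀ j, y j ≤ s ↔ y' j ≤ s') :
    empCdf y s = empCdf y' s' := by
  simp only [empCdf, h]

lemma empCdf_eq_zero {y : Fin n → ℝ} {t : ℝ} (h : ∀ j, t < y j) : empCdf y t = 0 := by
  simp [empCdf, not_le.2 (h _)]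

lemma empCdf_eq_one (hn : 0 < n) {y : Fin n → ℝ} {t : ℝ} (h : ∀ j, y j ≤ t) :
    empCdf y t = 1 := by
  simp [empCdf, h, hn.ne']

lemma monotone_empCdf (y : Fin n → ℝ) : Monotone (empCdf y) := by
  intro a b hab
  unfold empCdf
  gcongr with j
  split_ifs <;> linarith

lemma empCdf_eventuallyEq_nhdsGE (y : Fin n → ℝ) (x : ℝ) :
    empCdf y =ᶠ[𝓝[≥] x] fun _ => empCdf y x := by
  have h : ∀ j, ∀ᶠ t in 𝓝[≥] x, (y j ≤ t ↔ y j ≤ x) := fun j => by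
    rcases le_or_gt (y j) x with hj | hj
    · filter_upwards [self_mem_nhdsWithin] with t ht using iff_of_true (hj.trans ht) hj
    · filter_upwards [nhdsWithin_le_nhds (eventually_lt_nhds hj)] with t ht
      exact iff_of_false (not_le.2 ht) (not_le.2 hj)
  filter_upwards [eventually_all.2 h] with t ht using empCdf_congr ht

lemma isDistFun_empCdf (hn : 0 < n) (y : Fin n → ℝ) : IsDistFun (empCdf y) := by
  refine ⟨monotone_empCdf y, fun x => ?_, ?_, ?_⟩
  · exact tendsto_const_nhds.congr' (empCdf_eventuallyEq_nhdsGE y x).symm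
  · refine tendsto_const_nhds.congr' ?_
    filter_upwards [eventually_all.2 fun j => eventually_lt_atBot (y j)] with t ht
    exact (empCdf_eq_zero ht).symm
  · refine tendsto_const_nhds.congr' ?_
    filter_upwards [eventually_all.2 fun j => eventually_ge_atTop (y j)] with t ht
    exact (empCdf_eq_one hn ht).symm

lemma measurable_empCdf_apply (t : ℝ) : Measurable fun y : Fin n → ℝ => empCdf y t := by
  refine Measurable.div_const (Finset.measurable_sum _ fun j _ => ?_) _
  exact Measurable.ite (measurableSet_le (measurable_pi_apply j) measurable_const)
    measurable_const measurable_const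

end EmpiricalCdf

lemma Ucdf_of_mem_Icc {t : ℝ} (ht : t ∈ Icc 0 1) : Ucdf t = t := by
  rw [Ucdf, min_eq_left ht.2, max_eq_right ht.1]

lemma isDistFun_Ucdf : IsDistFun Ucdf := by
  have hc : Continuous Ucdf := continuous_const.max (continuous_id.min continuous_const)
  refine ⟨fun a b h => max_le_max le_rfl (min_le_min h le_rfl), fun x => hc.continuousWithinAt,
    tendsto_const_nhds.congr' ?_, tendsto_const_nhds.congr' ?_⟩
  · filter_upwards [eventually_le_atBot 0] with t ht
    simp [Ucdf, ht, ht.trans zero_le_one]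
  · filter_upwards [eventually_ge_atTop 1] with t ht
    simp [Ucdf, ht]

section Clamp

variable {δ u t : ℝ}

lemma le_max_min_iff {y : ℝ} (hδ : δ < y) (hu : y ≤ u) : y ≤ max δ (min t u) ↔ y ≤ t := by
  simp [not_le.2 hδ, hu]

lemma lt_of_Ucdf_lt_max_min (hδu : δ ≤ u) (hu : u ≤ 1) (h : Ucdf t < max δ (min t u)) :
    t < δ := by
  unfold Ucdf at h
  by_contra! ht
  simp only [max_def, min_def] at h
  split_ifs at h <;> linarith

lemma lt_of_max_min_lt_Ucdf (hδ : 0 ≤ δ) (h : max δ (min t u) < Ucdf t) : u < t := by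
  unfold Ucdf at h
  by_contra! ht
  simp only [max_def, min_def] at h
  split_ifs at h <;> linarith

end Clamp

section RationalApproximation

variable {q : ℕ} {G H : ℝ → ℝ}

/-- Rational vectors indexed by `Fin (q + 1)` form a countable type; `rFG q` only reads the
entries `1, …, q`. -/
noncomputable def extendRat (c : Fin (q + 1) → ℚ) : ℕ → ℝ :=
  fun i => if h : i < q + 1 then (c ⟨i, h⟩ : ℝ) else 0

variable (q) in
abbrev MonotoneRatVec : Type := {c : Fin (q + 1) → ℚ // MonotoneOn (extendRat c) (Icc 1 q)}

lemma tendsto_dext {ι : Type*} {l : Filter ι} (hG : ∀ x, ContinuousWithinAt G (Ici x) x)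
    {c : ι → ℕ → ℝ} {v : ℕ → ℝ} (hc : ∀ i ∈ Icc 1 q, Tendsto (fun k => c k i) l (𝓝[≥] v i))
    {i : ℕ} (hi : i ≤ q + 1) : Tendsto (fun k => dext q G (c k) i) l (𝓝 (dext q G v i)) := by
  unfold dext
  split_ifs
  · exact tendsto_const_nhds
  · exact tendsto_const_nhds
  · exact (hG _).tendsto.comp (hc i ⟨by omega, by omega⟩)

lemma tendsto_rFG {ι : Type*} {l : Filter ι} (hG : ∀ x, ContinuousWithinAt G (Ici x) x)
    (hH : ∀ x, ContinuousWithinAt H (Ici x) x) {c : ι → ℕ → ℝ} {v : ℕ → ℝ}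
    (hc : ∀ i ∈ Icc 1 q, Tendsto (fun k => c k i) l (𝓝[≥] v i)) :
    Tendsto (fun k => rFG q G H (c k)) l (𝓝 (rFG q G H v)) :=
  tendsto_finsetSum _ fun i hi => by
    have hi : i < q + 1 := Finset.mem_range.1 hi
    exact ((tendsto_dext hG hc hi).sub (tendsto_dext hG hc hi.le)).min
      ((tendsto_dext hH hc hi).sub (tendsto_dext hH hc hi.le))

lemma monotone_ceil_mul_div (m : ℕ) :
    Monotone fun x : ℝ => (⌈(m + 1 : ℝ) * x⌉ : ℝ) / (m + 1) := fun _ _ h =>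
  div_le_div_of_nonneg_right (Int.cast_mono (Int.ceil_mono (by gcongr))) (by positivity)

lemma tendsto_ceil_mul_div (x : ℝ) :
    Tendsto (fun m : ℕ => (⌈(m + 1 : ℝ) * x⌉ : ℝ) / (m + 1)) atTop (𝓝[≥] x) := by
  have hle : ∀ m : ℕ, x ≤ (⌈(m + 1 : ℝ) * x⌉ : ℝ) / (m + 1) := fun m => by
    rw [le_div_iff₀ (by positivity), mul_comm]
    exact Int.le_ceil _
  have hlt : ∀ m : ℕ, (⌈(m + 1 : ℝ) * x⌉ : ℝ) / (m + 1) ≤ x + 1 / (m + 1) := fun m => by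
    have h := Int.ceil_lt_add_one ((m + 1 : ℝ) * x)
    have h' : (x + 1 / (m + 1)) * (m + 1) = (m + 1 : ℝ) * x + 1 := by field_simp
    rw [div_le_iff₀ (by positivity), h']
    exact h.le
  refine tendsto_nhdsWithin_iff.2 ⟨?_, Eventually.of_forall hle⟩
  refine tendsto_of_tendsto_of_tendsto_of_le_of_le tendsto_const_nhds ?_ hle hlt
  simpa using tendsto_const_nhds.add (tendsto_one_div_add_atTop_nhds_zero_nat (𝕜 := ℝ))

/-- Round `v` up to the grid `ℤ / (m + 1)`. -/
lemma exists_tendsto_extendRat {v : ℕ → ℝ} (hv : MonotoneOn v (Icc 1 q)) :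
    ∃ c : ℕ → Fin (q + 1) → ℚ, (∀ m, MonotoneOn (extendRat (c m)) (Icc 1 q)) ∧
      ∀ i ∈ Icc 1 q, Tendsto (fun m => extendRat (c m) i) atTop (𝓝[≥] v i) := by
  let c : ℕ → Fin (q + 1) → ℚ := fun m k => (⌈((m : ℝ) + 1) * v k⌉ : ℚ) / ((m : ℚ) + 1)
  have hc : ∀ (m : ℕ), ∀ i ∈ Icc 1 q,
      extendRat (c m) i = (⌈(m + 1 : ℝ) * v i⌉ : ℝ) / (m + 1) := fun m i hi => by
    simp [c, extendRat, Nat.lt_succ_of_le hi.2]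
  refine ⟨c, fun m a ha b hb hab => ?_, fun i hi => ?_⟩
  · rw [hc m a ha, hc m b hb]
    exact monotone_ceil_mul_div m (hv ha hb hab)
  · simp_rw [hc _ i hi]
    exact tendsto_ceil_mul_div (v i)

lemma sInf_rFG_eq_iInf_rat (hG : IsDistFun G) (hH : IsDistFun H) :
    sInf {r | ∃ v, MonotoneOn v (Icc 1 q) ∧ r = rFG q G H v} =
      ⨅ c : MonotoneRatVec q, rFG q G H (extendRat c.1) := by
  have hbdd := bddBelow_rFG hG hH (q := q)
  have hbdd' : BddBelow (range fun c : MonotoneRatVec q => rFG q G H (extendRat c.1)) := by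
    refine hbdd.mono ?_
    rintro _ ⟨c, rfl⟩
    exact ⟨_, c.2, rfl⟩
  have : Nonempty (MonotoneRatVec q) := ⟨⟨0, fun _ _ _ _ _ => by simp [extendRat]⟩⟩
  refine le_antisymm (le_ciInf fun c => csInf_le hbdd ⟨_, c.2, rfl⟩) ?_
  refine le_csInf ⟨_, fun _ => 0, monotoneOn_const, rfl⟩ ?_
  rintro _ ⟨v, hv, rfl⟩
  obtain ⟨c, hcmono, hclim⟩ := exists_tendsto_extendRat hv
  exact ge_of_tendsto' (tendsto_rFG hG.2.1 hH.2.1 hclim) fun m => ciInf_le hbdd' ⟨c m, hcmono m⟩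

lemma measurable_rFG {α : Type*} [MeasurableSpace α] {G H : α → ℝ → ℝ}
    (hG : ∀ t, Measurable fun a => G a t) (hH : ∀ t, Measurable fun a => H a t) (v : ℕ → ℝ) :
    Measurable fun a => rFG q (G a) (H a) v := by
  have hdext : ∀ {K : α → ℝ → ℝ}, (∀ t, Measurable fun a => K a t) →
      ∀ i, Measurable fun a => dext q (K a) v i := fun hK i => by
    unfold dext
    split_ifs
    · exact measurable_const
    · exact measurable_const
    · exact hK _
  exact Finset.measurable_sum _ fun i _ =>
    ((hdext hG _).sub (hdext hG _)).min ((hdext hH _).sub (hdext hH _))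

lemma measurable_Dq_empCdf_Ucdf {n : ℕ} (hn : 0 < n) :
    Measurable fun y : Fin n → ℝ => Dq q (empCdf y) Ucdf := by
  have h : (fun y : Fin n → ℝ => Dq q (empCdf y) Ucdf) =
      fun y => 1 - ⨅ c : MonotoneRatVec q, rFG q (empCdf y) Ucdf (extendRat c.1) :=
    funext fun y => by rw [Dq, sInf_rFG_eq_iInf_rat (isDistFun_empCdf hn y) isDistFun_Ucdf]
  rw [h]
  exact measurable_const.sub (Measurable.iInf fun c =>
    measurable_rFG (G := fun y => empCdf y) (H := fun _ => Ucdf) measurable_empCdf_apply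
      (fun _ => measurable_const) _)

end RationalApproximation

section QuantileTransform

variable {F : ℝ → ℝ}

lemma IsDistFun.Ioo_subset_range (hF : IsDistFun F) (hc : Continuous F) : Ioo 0 1 ⊆ range F :=
  fun _ h => mem_range_of_exists_le_of_exists_ge hc
    (hF.2.2.1.eventually (ge_mem_nhds h.1)).exists (hF.2.2.2.eventually (le_mem_nhds h.2)).exists

lemma Monotone.monotoneOn_invFun (hF : Monotone F) : MonotoneOn (Function.invFun F) (range F) := by
  rintro _ ⟨a, rfl⟩ _ ⟨b, rfl⟩ hab
  rcases hab.eq_or_lt with h | h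
  · rw [h]
  · refine (hF.reflect_lt ?_).le
    rwa [Function.invFun_eq (f := F) ⟨a, rfl⟩, Function.invFun_eq (f := F) ⟨b, rfl⟩]

lemma Monotone.le_of_apply_le_of_notMem (hF : Monotone F) {x t : ℝ}
    (hx : F x ∉ F '' range ((↑) : ℚ → ℝ)) (h : F x ≤ F t) : x ≤ t := by
  by_contra! htx
  obtain ⟨r, htr, hrx⟩ := exists_rat_btwn htx
  exact hx ⟨r, ⟨r, rfl⟩, le_antisymm (hF hrx.le) (h.trans (hF htr.le))⟩

/-- Contains `0`, `1` and every value that `F` takes on a nondegenerate interval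
(such an interval contains a rational). -/
def exceptionalValues (F : ℝ → ℝ) : Set ℝ :=
  insert 0 (insert 1 (F '' range ((↑) : ℚ → ℝ)))

lemma countable_exceptionalValues (F : ℝ → ℝ) : (exceptionalValues F).Countable :=
  (((countable_range _).image F).insert 1).insert 0

lemma IsDistFun.mem_Ioo_of_notMem (hF : IsDistFun F) {x : ℝ}
    (hx : F x ∉ exceptionalValues F) :
    F x ∈ Ioo 0 1 ∧ ∀ t, F x ≤ F t → x ≤ t := by
  simp only [exceptionalValues, mem_insert_iff, not_or] at hx
  obtain ⟨h0, h1, hrat⟩ := hx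
  exact ⟨⟨(hF.mem_Icc x).1.lt_of_ne' h0, (hF.mem_Icc x).2.lt_of_ne h1⟩,
    fun t => hF.1.le_of_apply_le_of_notMem hrat⟩

lemma exists_bounds_of_mem_Ioo {n : ℕ} {y : Fin n → ℝ} (hy : ∀ j, y j ∈ Ioo 0 1) :
    ∃ δ u, 0 < δ ∧ δ ≤ u ∧ u < 1 ∧ ∀ j, δ < y j ∧ y j ≤ u := by
  have hδ : ∀ᶠ δ in 𝓝[>] (0 : ℝ), 0 < δ ∧ δ < 1 ∧ ∀ j, δ < y j :=
    eventually_mem_nhdsWithin.and (nhdsWithin_le_nhds ((eventually_lt_nhds one_pos).and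
      (eventually_all.2 fun j => eventually_lt_nhds (hy j).1)))
  obtain ⟨δ, hδ0, hδ1, hδy⟩ := hδ.exists
  have hu : ∀ᶠ u in 𝓝[<] (1 : ℝ), u < 1 ∧ δ < u ∧ ∀ j, y j < u :=
    eventually_mem_nhdsWithin.and (nhdsWithin_le_nhds ((eventually_gt_nhds hδ1).and
      (eventually_all.2 fun j => eventually_gt_nhds (hy j).2)))
  obtain ⟨u, hu1, hδu, huy⟩ := hu.exists
  exact ⟨δ, u, hδ0, hδu.le, hu1, fun j => ⟨hδy j, (huy j).le⟩⟩

variable {q n : ℕ} {x : Fin n → ℝ}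

lemma rFG_empCdf_comp (hF : IsDistFun F) (hxmin : ∀ j t, F (x j) ≤ F t → x j ≤ t)
    (v : ℕ → ℝ) : rFG q (empCdf (F ∘ x)) Ucdf (F ∘ v) = rFG q (empCdf x) F v :=
  rFG_congr (fun _ _ => empCdf_congr fun j => ⟨hxmin j _, fun h => hF.1 h⟩)
    (fun _ _ => Ucdf_of_mem_Icc (hF.mem_Icc _))

/-- Clamp `w` into `[δ, u] ⊂ (0, 1)`, which the samples `F (x j)` do not notice, and pull it
back through a right inverse of `F`. -/
lemma exists_rFG_le (hF : IsDistFun F) (hFc : Continuous F) (hn : 0 < n)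
    (hx01 : ∀ j, F (x j) ∈ Ioo 0 1) (hxmin : ∀ j t, F (x j) ≤ F t → x j ≤ t)
    {w : ℕ → ℝ} (hw : MonotoneOn w (Icc 1 q)) :
    ∃ v, MonotoneOn v (Icc 1 q) ∧ rFG q (empCdf x) F v ≤ rFG q (empCdf (F ∘ x)) Ucdf w := by
  obtain ⟨δ, u, hδ, hδu, hu, hxδu⟩ := exists_bounds_of_mem_Ioo hx01
  set φ : ℝ → ℝ := fun t => max δ (min t u)
  have hφ : Monotone φ := fun _ _ h => max_le_max le_rfl (min_le_min h le_rfl)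
  have hφF : ∀ t, φ t ∈ range F := fun t => hF.Ioo_subset_range hFc
    ⟨hδ.trans_le (le_max_left _ _), (max_le hδu (min_le_right _ _)).trans_lt hu⟩
  have hFφ : ∀ t, F (Function.invFun F (φ t)) = φ t := fun t => Function.invFun_eq (hφF t)
  have hxφ : ∀ j t, F (x j) ≤ φ t ↔ F (x j) ≤ t := fun j _ =>
    le_max_min_iff (hxδu j).1 (hxδu j).2
  refine ⟨Function.invFun F ∘ φ ∘ w,
    hF.1.monotoneOn_invFun.comp (hφ.comp_monotoneOn hw) fun i _ => hφF (w i), ?_⟩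
  calc rFG q (empCdf x) F (Function.invFun F ∘ φ ∘ w) = rFG q (empCdf (F ∘ x)) φ w := by
        refine rFG_congr (fun i _ => empCdf_congr fun j => ?_) (fun i _ => hFφ (w i))
        show x j ≤ Function.invFun F (φ (w i)) ↔ F (x j) ≤ w i
        rw [← hxφ]
        exact ⟨fun h => (hF.1 h).trans_eq (hFφ _), fun h => hxmin j _ (h.trans_eq (hFφ _).symm)⟩
    _ ≤ rFG q (empCdf (F ∘ x)) Ucdf w :=
        rFG_le_rFG (isDistFun_empCdf hn _) isDistFun_Ucdf
          (fun t ht => empCdf_eq_zero fun j =>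
            (lt_of_Ucdf_lt_max_min hδu hu.le ht).trans (hxδu j).1)
          (fun t ht => empCdf_eq_one hn fun j =>
            (hxδu j).2.trans (lt_of_max_min_lt_Ucdf hδ.le ht).le) hw

theorem Dq_empCdf_eq_Dq_empCdf_comp (hF : IsDistFun F) (hFc : Continuous F) (hn : 0 < n)
    (hx01 : ∀ j, F (x j) ∈ Ioo 0 1) (hxmin : ∀ j t, F (x j) ≤ F t → x j ≤ t) :
    Dq q (empCdf x) F = Dq q (empCdf (F ∘ x)) Ucdf :=
  le_antisymm
    (Dq_le_Dq_of_forall_exists_le (isDistFun_empCdf hn _) isDistFun_Ucdf fun v hv =>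
      ⟨F ∘ v, hF.1.comp_monotoneOn hv, (rFG_empCdf_comp hF hxmin v).le⟩)
    (Dq_le_Dq_of_forall_exists_le (isDistFun_empCdf hn _) hF fun _ hw =>
      exists_rFG_le hF hFc hn hx01 hxmin hw)

end QuantileTransform

lemma isDistFun_cdf (μ : Measure ℝ) : IsDistFun (cdf μ) :=
  ⟨(cdf μ).mono, (cdf μ).right_continuous, tendsto_cdf_atBot μ, tendsto_cdf_atTop μ⟩

section ProbabilityIntegralTransform

variable {μ : Measure ℝ} [IsProbabilityMeasure μ]

lemma measure_cdf_preimage_Iic (hc : Continuous (cdf μ)) (c : ℝ) :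
    μ (cdf μ ⁻¹' Iic c) = ENNReal.ofReal (min c 1) := by
  rcases le_or_gt 1 c with h1 | h1
  · rw [min_eq_right h1, ENNReal.ofReal_one, ← measure_univ (μ := μ)]
    exact congrArg μ (eq_univ_of_forall fun t => (cdf_le_one μ t).trans h1)
  rw [min_eq_left h1.le]
  set S := cdf μ ⁻¹' Iic c
  rcases S.eq_empty_or_nonempty with hS | hS
  · have hc0 : c ≤ 0 := by
      by_contra! h0
      obtain ⟨t, ht⟩ := ((tendsto_cdf_atBot μ).eventually (ge_mem_nhds h0)).exists
      exact hS.subset ht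
    rw [hS, measure_empty, ENNReal.ofReal_of_nonpos hc0]
  obtain ⟨T, hT⟩ := ((tendsto_cdf_atTop μ).eventually (lt_mem_nhds h1)).exists
  have hbdd : BddAbove S := ⟨T, fun t ht => ((cdf μ).mono.reflect_lt (lt_of_le_of_lt ht hT)).le⟩
  have hb : sSup S ∈ S := (isClosed_Iic.preimage hc).csSup_mem hS hbdd
  have hSb : S = Iic (sSup S) :=
    Subset.antisymm (fun t ht => le_csSup hbdd ht) (fun t ht => ((cdf μ).mono ht).trans hb)
  have hcb : c ≤ cdf μ (sSup S) := by
    rcases le_or_gt c 0 with h0 | h0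
    · exact h0.trans (cdf_nonneg μ _)
    obtain ⟨a, ha⟩ := (isDistFun_cdf μ).Ioo_subset_range hc ⟨h0, h1⟩
    exact ha.symm.le.trans ((cdf μ).mono (le_csSup hbdd ha.le))
  rw [hSb, ← ofReal_cdf, le_antisymm hb hcb]

theorem map_cdf_eq_volume_restrict (hc : Continuous (cdf μ)) :
    μ.map (cdf μ) = volume.restrict (Icc 0 1) := by
  refine Measure.ext_of_Iic _ _ fun c => ?_
  have hIcc : Iic c ∩ Icc 0 1 = Icc 0 (min c 1) := by
    ext t
    simp only [mem_inter_iff, mem_Iic, mem_Icc, le_min_iff]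
    tauto
  rw [Measure.map_apply hc.measurable measurableSet_Iic, measure_cdf_preimage_Iic hc,
    Measure.restrict_apply measurableSet_Iic, hIcc, Real.volume_Icc, sub_zero]

end ProbabilityIntegralTransform

lemma ae_forall_notMem_of_countable {Ω α ι : Type*} [MeasurableSpace Ω] [MeasurableSpace α]
    [Countable ι] {P : Measure Ω} {ν : Measure α} [NullSingletonClass ν] {Y : ι → Ω → α}
    (hY : ∀ j, Measurable (Y j)) (hν : ∀ j, P.map (Y j) = ν) {C : Set α} (hC : C.Countable) :
    ∀ᵐ ω ∂P, ∀ j, Y j ω ∉ C :=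
  ae_all_iff.2 fun j => ae_of_ae_map (hY j).aemeasurable <| by
    rw [hν j]
    exact measure_eq_zero_iff_ae_notMem.1 (hC.measure_zero ν)

theorem Dq_distribution_free_general
    {Ω : Type*} [MeasurableSpace Ω] (P : Measure Ω)
    {Ω' : Type*} [MeasurableSpace Ω'] (P' : Measure Ω')
    (μ : Measure ℝ) [IsProbabilityMeasure μ] (F : ℝ → ℝ)
    (hFcdf : ∀ x, F x = (μ (Set.Iic x)).toReal) (hFcont : Continuous F)
    (n : ℕ) (hn : 0 < n)
    (X : Fin n → Ω → ℝ) (hXmeas : ∀ i, Measurable (X i))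
    (hXindep : iIndepFun X P)
    (hXdist : ∀ i, Measure.map (X i) P = μ)
    (W : Fin n → Ω' → ℝ) (hWmeas : ∀ i, Measurable (W i))
    (hWindep : iIndepFun W P')
    (hWdist : ∀ i, Measure.map (W i) P' = volume.restrict (Set.Icc 0 1))
    (q : ℕ) :
    Measure.map (fun ω => Dq q (empOf n X ω) F) P =
      Measure.map (fun ω => Dq q (empOf n W ω) Ucdf) P' := by
  obtain rfl : F = cdf μ := funext fun x => by rw [hFcdf, cdf_eq_real, measureReal_def]
  set Y : Fin n → Ω → ℝ := fun j => cdf μ ∘ X j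
  have hYmeas : ∀ j, Measurable (Y j) := fun j => hFcont.measurable.comp (hXmeas j)
  have hYdist : ∀ j, P.map (Y j) = volume.restrict (Icc 0 1) := fun j => by
    rw [← Measure.map_map hFcont.measurable (hXmeas j), hXdist j,
      map_cdf_eq_volume_restrict hFcont]
  have hae : (fun ω => Dq q (empOf n X ω) (cdf μ)) =ᵐ[P]
      (fun y => Dq q (empCdf y) Ucdf) ∘ fun ω j => Y j ω := by
    filter_upwards [ae_forall_notMem_of_countable hYmeas hYdist
      (countable_exceptionalValues (cdf μ))] with ω hω
    have hgood := fun j => (isDistFun_cdf μ).mem_Ioo_of_notMem (hω j)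
    exact Dq_empCdf_eq_Dq_empCdf_comp (isDistFun_cdf μ) hFcont hn (fun j => (hgood j).1)
      fun j => (hgood j).2
  have hlaw : P.map (fun ω j => Y j ω) = P'.map (fun ω j => W j ω) := by
    rw [(hXindep.comp _ fun _ => hFcont.measurable).map_fun_eq_pi_map
        fun j => (hYmeas j).aemeasurable,
      hWindep.map_fun_eq_pi_map fun j => (hWmeas j).aemeasurable]
    exact congrArg Measure.pi (funext fun j => (hYdist j).trans (hWdist j).symm)
  rw [Measure.map_congr hae, ← Measure.map_map (measurable_Dq_empCdf_Ucdf hn)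
      (measurable_pi_lambda _ hYmeas), hlaw,
    Measure.map_map (measurable_Dq_empCdf_Ucdf hn) (measurable_pi_lambda _ hWmeas)]
  rfl

/-- For every continuous distribution function F, the law of D_q(F_n, F)
(for n i.i.d. samples from F) is the same, namely the law of D_q(U_n, U)
for n i.i.d. standard uniform samples. -/
theorem Dq_distribution_free
    {Ω : Type*} [MeasurableSpace Ω] (P : Measure Ω) [IsProbabilityMeasure P]
    {Ω' : Type*} [MeasurableSpace Ω'] (P' : Measure Ω') [IsProbabilityMeasure P']
    (μ : Measure ℝ) [IsProbabilityMeasure μ] (F : ℝ → ℝ)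
    (hFcdf : ∀ x, F x = (μ (Set.Iic x)).toReal) (hFcont : Continuous F)
    (n : ℕ) (hn : 0 < n)
    (X : Fin n → Ω → ℝ) (hXmeas : ∀ i, Measurable (X i))
    (hXindep : iIndepFun X P)
    (hXdist : ∀ i, Measure.map (X i) P = μ)
    (W : Fin n → Ω' → ℝ) (hWmeas : ∀ i, Measurable (W i))
    (hWindep : iIndepFun W P')
    (hWdist : ∀ i, Measure.map (W i) P' = volume.restrict (Set.Icc 0 1))
    (q : ℕ) (hq : 1 ≤ q) :
    Measure.map (fun ω => Dq q (empOf n X ω) F) P =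
      Measure.map (fun ω => Dq q (empOf n W ω) Ucdf) P' :=
  Dq_distribution_free_general P P' μ F hFcdf hFcont n hn X hXmeas hXindep hXdist W hWmeas hWindep
    hWdist q
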